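/- In the pair-HMM, suppose θ_0, θ ∈ Θ_0 both satisfy the marginal conditions h_X = f and h_Y = g. If f ≠ f_0, then D(θ|θ_0) = w(θ_0) − w(θ) ≥ −((1−p)/2)·Σ_x f_0(x) log(f(x)/f_0(x)) > 0, where p is the stationary probability of a vertical step under θ_0. Symmetrically for g ≠ g_0. -/

import Mathlib

open Finset Filter MeasureTheory
open scoped Classical

noncomputable section

/-- Hidden state space: 0 = horizontal step (1,0), 1 = vertical step (0,1), 2 = diagonal step (1,1). -/
abbrev E : Type := Fin 3

/-- The lattice step associated with each hidden state. -/
def stepv : E → ℕ × ℕ := ![(1,0), (0,1), (1,1)]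

/-- Number of X-letters emitted by the first `t` hidden steps. -/
def Nn (u : ℕ → E) (t : ℕ) : ℕ := ∑ i ∈ Finset.range t, (stepv (u i)).1

/-- Number of Y-letters emitted by the first `t` hidden steps. -/
def Mm (u : ℕ → E) (t : ℕ) : ℕ := ∑ i ∈ Finset.range t, (stepv (u i)).2

/-- Extend a finite hidden path to an infinite one (junk value 0 beyond `l`). -/
def extPath {l : ℕ} (u : Fin l → E) : ℕ → E := fun i => if h : i < l then u ⟨i, h⟩ else 0

/-- Conditional probability of the emitted letters for hidden steps `s, …, t-1`
(0-indexed) along path `u`, with observation streams `x` and `y` (0-indexed). -/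
def emit {A : Type} (f g : A → ℝ) (h : A → A → ℝ) (x y : ℕ → A) (u : ℕ → E) (s t : ℕ) : ℝ :=
  ∏ i ∈ Finset.Ico s t,
    if u i = 0 then f (x (Nn u i))
    else if u i = 1 then g (y (Mm u i))
    else h (x (Nn u i)) (y (Mm u i))

/-- Probability of a finite hidden path under initial law `mu` and transition matrix `pr`. -/
def pathProb (pr : E → E → ℝ) (mu : E → ℝ) {l : ℕ} (u : Fin l → E) : ℝ :=
  mu (extPath u 0) * ∏ i ∈ Finset.range (l - 1), pr (extPath u i) (extPath u (i + 1))

/-- `P_θ(ε_{1:t} ∈ E_{n,m} with |path| = t, X_{1:n} = x, Y_{1:m} = y)`: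
joint probability of a hidden path of length `t` ending at `(n,m)` together with
the emitted observations. -/
def jointProb {A : Type} (pr : E → E → ℝ) (mu : E → ℝ) (f g : A → ℝ) (h : A → A → ℝ)
    (x y : ℕ → A) (t n m : ℕ) : ℝ :=
  ∑ u : Fin t → E,
    if Nn (extPath u) t = n ∧ Mm (extPath u) t = m then
      pathProb pr mu u * emit f g h x y (extPath u) 0 t
    else 0

/-- `Q_θ(x_{1:n}, y_{1:m}) = Σ_{e ∈ E_{n,m}} P_θ(ε_{1:|e|} = e, x_{1:n}, y_{1:m})`:
all hidden paths ending at `(n,m)` have length ≤ n+m. -/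
def Qprob {A : Type} (pr : E → E → ℝ) (mu : E → ℝ) (f g : A → ℝ) (h : A → A → ℝ)
    (x y : ℕ → A) (n m : ℕ) : ℝ :=
  ∑ l ∈ Finset.range (n + m + 1), jointProb pr mu f g h x y l n m

/-- `P_θ(Z_t = (n,m))`. -/
def walkProb (pr : E → E → ℝ) (mu : E → ℝ) (t n m : ℕ) : ℝ :=
  ∑ u : Fin t → E,
    if Nn (extPath u) t = n ∧ Mm (extPath u) t = m then pathProb pr mu u else 0

/-- `P_θ(∃ s ≥ 1, Z_s = (n,m))` (the walk is strictly increasing in `n+m`, so the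
events for different path lengths are disjoint and the probability is a sum). -/
def hitProb (pr : E → E → ℝ) (mu : E → ℝ) (n m : ℕ) : ℝ :=
  ∑ l ∈ Finset.Icc 1 (n + m), walkProb pr mu l n m

end

/-!
Partition the sample space by the cylinders of time `t`: the hidden path `ε_{1:t}` together
with the letters it has emitted. Grouping cylinders by the endpoint `k = Z_t` of the walk,
`E[log Q_{θ₀}] - E[log Q_θ]` becomes a sum over `k` of relative entropies. For fixed `k`,
`Q_{θ₀} ≥ P_{θ₀}(Z_t = k, ·)`, and summing out the `Y`-letters with Assumption 3 leaves
`P(Z_t = k) ∏ f₀(xⱼ)` against at most `(k₁ + k₂ + 1) ∏ f(xⱼ)`; by the log-sum inequality the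
fiber contributes at least `P(Z_t = k) (log P(Z_t = k) - log (k₁ + k₂ + 1) + k₁ KL(f₀ ‖ f))`.
Summing over the `(t + 1)²` endpoints, the entropy of `Z_t` costs at most `log (t + 1)²`, and
stationarity gives `E[N_t] = t (1 - p)`. Hence
`E[log Q_{θ₀} - log Q_θ] ≥ t (1 - p) KL(f₀ ‖ f) - 4 log (t + 1)`; dividing by `t` and letting
`t → ∞` gives `w(θ₀) - w(θ) ≥ (1 - p) KL(f₀ ‖ f)`, which is positive by the strict Gibbs
inequality.
-/

lemma Fintype.sum_pi_fin_succ {β : Type*} [Fintype β] {m : ℕ} (F : (Fin (m + 1) → β) → ℝ) :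
    ∑ y, F y = ∑ y : Fin m → β, ∑ b, F (Fin.snoc y b) := by
  rw [← Fintype.sum_equiv (Fin.snocEquiv fun _ => β) (fun p => F (Fin.snoc p.2 p.1)) F
    fun _ => rfl, Fintype.sum_prod_type, sum_comm]

lemma Fintype.sum_prod_apply_eq_one {α : Type*} [Fintype α] {p : α → ℝ} (hp : ∑ a, p a = 1)
    (n : ℕ) :
    ∑ x : Fin n → α, ∏ j, p (x j) = 1 := by
  rw [← Fintype.prod_sum (fun (_ : Fin n) a => p a), hp, prod_const_one]

lemma Fintype.sum_prod_apply_mul_sum {α : Type*} [Fintype α] {p : α → ℝ} (hp : ∑ a, p a = 1)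
    (L : α → ℝ) (n : ℕ) :
    ∑ x : Fin n → α, (∏ j, p (x j)) * ∑ i, L (x i) = n * ∑ a, p a * L a := by
  have hcoord : ∀ i : Fin n, ∑ x : Fin n → α, (∏ j, p (x j)) * L (x i) = ∑ a, p a * L a := by
    intro i
    have hfactor : ∀ j : Fin n, ∑ a, p a * (if j = i then L a else 1)
        = if j = i then ∑ a, p a * L a else 1 := by
      intro j; split_ifs <;> simp [hp]
    rw [← Fintype.prod_ite_eq' i fun _ => ∑ a, p a * L a]
    simp_rw [← hfactor, Fintype.prod_sum, prod_mul_distrib, Fintype.prod_ite_eq']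
  calc ∑ x : Fin n → α, (∏ j, p (x j)) * ∑ i, L (x i)
      = ∑ i, ∑ x : Fin n → α, (∏ j, p (x j)) * L (x i) := by
        simp_rw [mul_sum]; exact sum_comm
    _ = n * ∑ a, p a * L a := by simp [hcoord]

lemma MeasureTheory.integral_comp_eq_sum_preimage {Ω C : Type*} [MeasurableSpace Ω] [Fintype C]
    (μ : Measure Ω) [IsFiniteMeasure μ] (κ : Ω → C) (hκ : ∀ c, MeasurableSet (κ ⁻¹' {c}))
    (G : C → ℝ) : ∫ ω, G (κ ω) ∂μ = ∑ c, μ.real (κ ⁻¹' {c}) * G c := by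
  let _ : MeasurableSpace C := ⊤
  have hm : Measurable κ := measurable_to_countable' hκ
  rw [← integral_map hm.aemeasurable (measurable_of_finite G).aestronglyMeasurable,
    integral_fintype (.of_finite)]
  simp_rw [map_measureReal_apply hm (measurableSet_singleton _), smul_eq_mul]

section LogSum

open Real

variable {ι : Type*} (s : Finset ι)

/-- The log-sum inequality: Jensen for the convex function `x log x`. -/
lemma sum_mul_log_div_le_sum_mul_log_div {a b : ι → ℝ} (ha : ∀ i ∈ s, 0 ≤ a i)
    (hb : ∀ i ∈ s, 0 < b i) :
    (∑ i ∈ s, a i) * log ((∑ i ∈ s, a i) / ∑ i ∈ s, b i) ≤ ∑ i ∈ s, a i * log (a i / b i) := by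
  rcases s.eq_empty_or_nonempty with rfl | hs
  · simp
  set B := ∑ i ∈ s, b i
  have hB : 0 < B := sum_pos hb hs
  have hJensen := convexOn_mul_log.map_sum_le (t := s) (w := fun i => b i / B)
    (p := fun i => a i / b i) (fun i hi => (div_pos (hb i hi) hB).le)
    (by rw [← sum_div, div_self hB.ne'])
    fun i hi => Set.mem_Ici.2 (div_nonneg (ha i hi) (hb i hi).le)
  have hweight : ∀ i ∈ s, ∀ c, b i / B * (a i / b i * c) = a i * c / B :=
    fun i hi c => by field_simp [(hb i hi).ne']
  simp only [smul_eq_mul] at hJensen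
  rw [sum_congr rfl fun i hi => by simpa using hweight i hi 1,
    sum_congr rfl fun i hi => hweight i hi _, ← sum_div, ← sum_div, div_mul_eq_mul_div,
    div_le_div_iff_of_pos_right hB] at hJensen
  exact hJensen

lemma neg_log_card_le_sum_mul_log {w : ι → ℝ} (hw : ∀ i ∈ s, 0 ≤ w i)
    (hw1 : ∑ i ∈ s, w i = 1) : -log #s ≤ ∑ i ∈ s, w i * log (w i) := by
  simpa [hw1] using sum_mul_log_div_le_sum_mul_log_div s hw (b := 1) fun _ _ => one_pos

lemma mul_log_div_le_sum_mul_log_sub {a q₀ q : ι → ℝ} {β : ℝ} (ha : ∀ i ∈ s, 0 ≤ a i)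
    (haq₀ : ∀ i ∈ s, a i ≤ q₀ i) (hq : ∀ i ∈ s, 0 < q i) (hpos : 0 < ∑ i ∈ s, a i)
    (hβ : ∑ i ∈ s, q i ≤ β) :
    (∑ i ∈ s, a i) * log ((∑ i ∈ s, a i) / β) ≤ ∑ i ∈ s, a i * (log (q₀ i) - log (q i)) := by
  have hQ : 0 < ∑ i ∈ s, q i := sum_pos hq (nonempty_of_sum_ne_zero hpos.ne')
  calc (∑ i ∈ s, a i) * log ((∑ i ∈ s, a i) / β)
      ≤ (∑ i ∈ s, a i) * log ((∑ i ∈ s, a i) / ∑ i ∈ s, q i) :=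
        mul_le_mul_of_nonneg_left (log_le_log (div_pos hpos (hQ.trans_le hβ))
          (div_le_div_of_nonneg_left hpos.le hQ hβ)) hpos.le
    _ ≤ ∑ i ∈ s, a i * log (a i / q i) := sum_mul_log_div_le_sum_mul_log_div s ha hq
    _ ≤ ∑ i ∈ s, a i * (log (q₀ i) - log (q i)) := sum_le_sum fun i hi => by
        rcases (ha i hi).eq_or_lt with h0 | h0
        · simp [← h0]
        rw [log_div h0.ne' (hq i hi).ne']
        exact mul_le_mul_of_nonneg_left (sub_le_sub_right (log_le_log h0 (haq₀ i hi)) _) h0.le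

/-- Strict Gibbs inequality, from `log x ≤ x - 1` with equality only at `x = 1`. -/
lemma sum_mul_log_div_neg {α : Type*} [Fintype α] {p q : α → ℝ} (hp : ∀ a, 0 < p a)
    (hq : ∀ a, 0 < q a) (hp1 : ∑ a, p a = 1) (hq1 : ∑ a, q a = 1) (hne : q ≠ p) :
    ∑ a, p a * log (q a / p a) < 0 := by
  have hterm : ∀ a, p a * log (q a / p a)
      = q a - p a + p a * (log (q a / p a) - (q a / p a - 1)) := fun a => by
    field_simp [(hp a).ne']; ring
  obtain ⟨a₀, ha₀⟩ := Function.ne_iff.1 hne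
  calc ∑ a, p a * log (q a / p a) < ∑ a, (q a - p a) := by
        refine sum_lt_sum (fun a _ => ?_) ⟨a₀, mem_univ _, ?_⟩ <;> rw [hterm]
        · nlinarith [hp a, log_le_sub_one_of_pos (div_pos (hq a) (hp a))]
        · have := log_lt_sub_one_of_pos (div_pos (hq a₀) (hp a₀))
            fun h => ha₀ ((div_eq_one_iff_eq (hp a₀).ne').1 h)
          nlinarith [hp a₀]
    _ = 0 := by rw [sum_sub_distrib, hp1, hq1, sub_self]

end LogSum

lemma tendsto_log_add_one_div_atTop :
    Tendsto (fun t : ℕ => Real.log (t + 1) / t) atTop (nhds 0) := by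
  refine ((Real.tendsto_pow_log_div_mul_add_atTop 1 (-1) 1 one_ne_zero).comp
    (tendsto_atTop_add_const_right _ 1 tendsto_natCast_atTop_atTop)).congr fun t => ?_
  simp

lemma stepv_fst (e : E) : (stepv e).1 = if e = 1 then 0 else 1 := by fin_cases e <;> rfl

lemma stepv_snd (e : E) : (stepv e).2 = if e = 0 then 0 else 1 := by fin_cases e <;> rfl

lemma Nn_succ (u : ℕ → E) (t : ℕ) : Nn u (t + 1) = Nn u t + (stepv (u t)).1 :=
  sum_range_succ _ _

lemma Mm_succ (u : ℕ → E) (t : ℕ) : Mm u (t + 1) = Mm u t + (stepv (u t)).2 :=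
  sum_range_succ _ _

lemma Nn_congr {u v : ℕ → E} {t : ℕ} (h : ∀ i < t, u i = v i) : Nn u t = Nn v t :=
  sum_congr rfl fun i hi => by rw [h i (mem_range.1 hi)]

lemma Mm_congr {u v : ℕ → E} {t : ℕ} (h : ∀ i < t, u i = v i) : Mm u t = Mm v t :=
  sum_congr rfl fun i hi => by rw [h i (mem_range.1 hi)]

lemma Nn_mono (u : ℕ → E) : Monotone (Nn u) := fun _ _ h =>
  sum_le_sum_of_subset (range_subset_range.2 h)

lemma Mm_mono (u : ℕ → E) : Monotone (Mm u) := fun _ _ h =>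
  sum_le_sum_of_subset (range_subset_range.2 h)

lemma Nn_lt_of_ne_one (u : ℕ → E) {i t : ℕ} (hi : i < t) (h : u i ≠ 1) : Nn u i < Nn u t := by
  have : Nn u i < Nn u (i + 1) := by rw [Nn_succ, stepv_fst, if_neg h]; omega
  exact this.trans_le (Nn_mono u hi)

lemma Mm_lt_of_ne_zero (u : ℕ → E) {i t : ℕ} (hi : i < t) (h : u i ≠ 0) : Mm u i < Mm u t := by
  have : Mm u i < Mm u (i + 1) := by rw [Mm_succ, stepv_snd, if_neg h]; omega
  exact this.trans_le (Mm_mono u hi)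

lemma Nn_le (u : ℕ → E) (t : ℕ) : Nn u t ≤ t := by
  induction t with
  | zero => simp [Nn]
  | succ t ih => rw [Nn_succ, stepv_fst]; split_ifs <;> omega

lemma Mm_le (u : ℕ → E) (t : ℕ) : Mm u t ≤ t := by
  induction t with
  | zero => simp [Mm]
  | succ t ih => rw [Mm_succ, stepv_snd]; split_ifs <;> omega

lemma le_Nn_add_Mm (u : ℕ → E) (t : ℕ) : t ≤ Nn u t + Mm u t := by
  induction t with
  | zero => omega
  | succ t ih =>
    rw [Nn_succ, Mm_succ]
    have : ∀ e : E, 0 < (stepv e).1 + (stepv e).2 := by decide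
    have := this (u t)
    omega

section Emission

variable {A : Type} (f g : A → ℝ) (h : A → A → ℝ)

lemma emit_succ (x y : ℕ → A) (u : ℕ → E) (t : ℕ) :
    emit f g h x y u 0 (t + 1) = emit f g h x y u 0 t *
      (if u t = 0 then f (x (Nn u t)) else if u t = 1 then g (y (Mm u t))
        else h (x (Nn u t)) (y (Mm u t))) :=
  prod_Ico_succ_top (Nat.zero_le _) _

variable {f g h}

lemma emit_nonneg (hf : ∀ a, 0 ≤ f a) (hg : ∀ a, 0 ≤ g a) (hh : ∀ a b, 0 ≤ h a b)
    (x y : ℕ → A) (u : ℕ → E) (s t : ℕ) : 0 ≤ emit f g h x y u s t :=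
  prod_nonneg fun _ _ => by split_ifs <;> first | exact hf _ | exact hg _ | exact hh _ _

lemma emit_pos (hf : ∀ a, 0 < f a) (hg : ∀ a, 0 < g a) (hh : ∀ a b, 0 < h a b)
    (x y : ℕ → A) (u : ℕ → E) (s t : ℕ) : 0 < emit f g h x y u s t :=
  prod_pos fun _ _ => by split_ifs <;> first | exact hf _ | exact hg _ | exact hh _ _

variable (f g h)

lemma emit_congr {x x' y y' : ℕ → A} {u u' : ℕ → E} {t : ℕ} (hu : ∀ i < t, u i = u' i)
    (hx : ∀ j < Nn u t, x j = x' j) (hy : ∀ j < Mm u t, y j = y' j) :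
    emit f g h x y u 0 t = emit f g h x' y' u' 0 t := by
  refine prod_congr rfl fun i hi => ?_
  have hit : i < t := (mem_Ico.1 hi).2
  rw [← hu i hit, ← Nn_congr fun j hj => hu j (hj.trans hit),
    ← Mm_congr fun j hj => hu j (hj.trans hit)]
  split_ifs with h0 h1
  · rw [hx _ (Nn_lt_of_ne_one u hit (by simp [h0]))]
  · rw [hy _ (Mm_lt_of_ne_zero u hit (by simp [h1]))]
  · rw [hx _ (Nn_lt_of_ne_one u hit h1), hy _ (Mm_lt_of_ne_zero u hit h0)]

end Emission

section Paths

lemma extPath_snoc_of_lt {l : ℕ} (u : Fin l → E) (e : E) {i : ℕ} (hi : i < l) :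
    extPath (Fin.snoc u e) i = extPath u i := by
  simp only [extPath, hi, hi.trans l.lt_succ_self, dif_pos]
  exact Fin.snoc_castSucc (α := fun _ => E) e u ⟨i, hi⟩

lemma extPath_snoc_self {l : ℕ} (u : Fin l → E) (e : E) : extPath (Fin.snoc u e) l = e := by
  simp only [extPath, l.lt_succ_self, dif_pos]
  exact Fin.snoc_last (α := fun _ => E) e u

variable (pr : E → E → ℝ) (mu : E → ℝ)

lemma pathProb_nonneg (hpr : ∀ e e', 0 ≤ pr e e') (hmu : ∀ e, 0 ≤ mu e) {l : ℕ}
    (u : Fin l → E) : 0 ≤ pathProb pr mu u :=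
  mul_nonneg (hmu _) (prod_nonneg fun _ _ => hpr _ _)

lemma pathProb_pos (hpr : ∀ e e', 0 < pr e e') (hmu : ∀ e, 0 < mu e) {l : ℕ}
    (u : Fin l → E) : 0 < pathProb pr mu u :=
  mul_pos (hmu _) (prod_pos fun _ _ => hpr _ _)

lemma pathProb_snoc {l : ℕ} (u : Fin (l + 1) → E) (e : E) :
    pathProb pr mu (Fin.snoc u e) = pathProb pr mu u * pr (extPath u l) e := by
  simp only [pathProb, Nat.add_sub_cancel, prod_range_succ,
    extPath_snoc_of_lt u e (Nat.succ_pos l), extPath_snoc_of_lt u e l.lt_succ_self,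
    extPath_snoc_self]
  rw [prod_congr rfl fun i hi => by
    rw [extPath_snoc_of_lt u e ((mem_range.1 hi).trans l.lt_succ_self),
      extPath_snoc_of_lt u e (Nat.succ_lt_succ (mem_range.1 hi))]]
  ring

variable {pr}

lemma sum_pathProb_mul_of_le (hpr1 : ∀ e, ∑ e', pr e e' = 1) {l t : ℕ} (hl : 0 < l)
    (hlt : l ≤ t) (φ : (ℕ → E) → ℝ) (hφ : ∀ u v, (∀ i < l, u i = v i) → φ u = φ v) :
    ∑ u : Fin t → E, pathProb pr mu u * φ (extPath u)
      = ∑ u : Fin l → E, pathProb pr mu u * φ (extPath u) := by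
  induction t, hlt using Nat.le_induction with
  | base => rfl
  | succ t hlt ih =>
    obtain ⟨s, rfl⟩ := Nat.exists_eq_add_of_lt (hl.trans_le hlt)
    rw [Fintype.sum_pi_fin_succ, ← ih]
    refine sum_congr rfl fun u _ => ?_
    simp_rw [pathProb_snoc, hφ (extPath (Fin.snoc u _)) (extPath u)
      fun i hi => extPath_snoc_of_lt u _ (hi.trans_le hlt), mul_right_comm _ _ (φ _),
      ← mul_sum, hpr1, mul_one]

lemma sum_pathProb_mul_apply_zero (hpr1 : ∀ e, ∑ e', pr e e' = 1) {t : ℕ} (ht : 0 < t)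
    (φ : E → ℝ) : ∑ u : Fin t → E, pathProb pr mu u * φ (extPath u 0) = ∑ e, mu e * φ e := by
  rw [sum_pathProb_mul_of_le mu hpr1 Nat.one_pos ht (fun v => φ (v 0))
    fun u v huv => by rw [huv 0 Nat.one_pos]]
  exact Fintype.sum_equiv (Equiv.funUnique (Fin 1) E) _ _ fun u => by simp [pathProb, extPath]

lemma sum_pathProb_eq_one (hpr1 : ∀ e, ∑ e', pr e e' = 1) (hmu1 : ∑ e, mu e = 1) {t : ℕ}
    (ht : 0 < t) : ∑ u : Fin t → E, pathProb pr mu u = 1 := by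
  simpa [hmu1] using sum_pathProb_mul_apply_zero mu hpr1 ht fun _ => 1

lemma sum_pathProb_le_one (hmu : ∀ e, 0 ≤ mu e) (hpr1 : ∀ e, ∑ e', pr e e' = 1)
    (hmu1 : ∑ e, mu e = 1) (t : ℕ) : ∑ u : Fin t → E, pathProb pr mu u ≤ 1 := by
  rcases t.eq_zero_or_pos with rfl | ht
  · simpa [pathProb, extPath, hmu1] using single_le_sum (fun e _ => hmu e) (mem_univ 0)
  · exact (sum_pathProb_eq_one mu hpr1 hmu1 ht).le

lemma sum_pathProb_mul_apply (hpr1 : ∀ e, ∑ e', pr e e' = 1)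
    (hstat : ∀ e', ∑ e, mu e * pr e e' = mu e') {i t : ℕ} (hit : i < t) (φ : E → ℝ) :
    ∑ u : Fin t → E, pathProb pr mu u * φ (extPath u i) = ∑ e, mu e * φ e := by
  rw [sum_pathProb_mul_of_le mu hpr1 i.succ_pos hit (fun v => φ (v i))
    fun u v huv => by rw [huv i i.lt_succ_self]]
  induction i generalizing φ with
  | zero => exact sum_pathProb_mul_apply_zero mu hpr1 Nat.one_pos φ
  | succ i ih =>
    rw [Fintype.sum_pi_fin_succ]
    simp_rw [pathProb_snoc, extPath_snoc_self, mul_assoc, ← mul_sum]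
    rw [ih (i.lt_succ_self.trans hit) fun e' => ∑ e, pr e' e * φ e]
    calc ∑ e', mu e' * ∑ e, pr e' e * φ e
        = ∑ e, (∑ e', mu e' * pr e' e) * φ e := by
          simp_rw [mul_sum, sum_mul, mul_assoc]; exact sum_comm
      _ = ∑ e, mu e * φ e := by simp_rw [hstat]

lemma sum_pathProb_mul_Nn (hpr1 : ∀ e, ∑ e', pr e e' = 1) (hmu1 : ∑ e, mu e = 1)
    (hstat : ∀ e', ∑ e, mu e * pr e e' = mu e') (t : ℕ) :
    ∑ u : Fin t → E, pathProb pr mu u * (Nn (extPath u) t : ℝ) = t * (1 - mu 1) := by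
  simp_rw [Nn, Nat.cast_sum, mul_sum]
  rw [sum_comm]
  have hstep : ∑ e, mu e * ((stepv e).1 : ℝ) = 1 - mu 1 := by
    rw [Fin.sum_univ_three] at hmu1
    simp only [Fin.sum_univ_three, stepv, Fin.isValue, Matrix.cons_val_zero,
      Matrix.cons_val_one, Matrix.cons_val, Nat.cast_one, Nat.cast_zero, mul_one, mul_zero]
    linarith
  rw [sum_congr rfl fun i hi => (sum_pathProb_mul_apply mu hpr1 hstat (mem_range.1 hi) _).trans
    hstep]
  simp only [sum_const, card_range, nsmul_eq_mul]

end Paths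

section Observations

variable {A : Type} [Nonempty A]

noncomputable def extObs {m : ℕ} (y : Fin m → A) : ℕ → A :=
  fun i => if hi : i < m then y ⟨i, hi⟩ else Classical.arbitrary A

lemma extObs_of_lt {m : ℕ} (y : Fin m → A) {i : ℕ} (hi : i < m) : extObs y i = y ⟨i, hi⟩ :=
  dif_pos hi

lemma extObs_snoc_of_lt {m : ℕ} (y : Fin m → A) (b : A) {i : ℕ} (hi : i < m) :
    extObs (Fin.snoc y b) i = extObs y i := by
  rw [extObs_of_lt _ (hi.trans m.lt_succ_self), extObs_of_lt _ hi]
  exact Fin.snoc_castSucc (α := fun _ => A) b y ⟨i, hi⟩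

lemma extObs_snoc_self {m : ℕ} (y : Fin m → A) (b : A) : extObs (Fin.snoc y b) m = b := by
  rw [extObs_of_lt _ m.lt_succ_self]
  exact Fin.snoc_last (α := fun _ => A) b y

lemma prod_range_extObs {M : Type*} [CommMonoid M] {m : ℕ} (y : Fin m → A) (φ : A → M) :
    ∏ j ∈ range m, φ (extObs y j) = ∏ j, φ (y j) := by
  rw [← Fin.prod_univ_eq_prod_range]
  exact prod_congr rfl fun j _ => by rw [extObs_of_lt y j.2]

variable [Fintype A] {f g : A → ℝ} {h : A → A → ℝ}

lemma sum_emit_extObs (hg1 : ∑ b, g b = 1) (hmX : ∀ a, ∑ b, h a b = f a) (x : ℕ → A)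
    (u : ℕ → E) (t : ℕ) {m : ℕ} (hm : Mm u t = m) :
    ∑ y : Fin m → A, emit f g h x (extObs y) u 0 t = ∏ j ∈ range (Nn u t), f (x j) := by
  induction t generalizing m with
  | zero =>
    obtain rfl : m = 0 := hm.symm.trans (sum_range_zero _)
    simp [emit, Nn]
  | succ t ih =>
    simp_rw [emit_succ]
    rw [Mm_succ, stepv_snd] at hm
    rw [Nn_succ, stepv_fst]
    by_cases h0 : u t = 0
    · rw [if_pos h0, add_zero] at hm
      simp_rw [if_pos h0, ← sum_mul, ih hm, if_neg (by simp [h0] : u t ≠ 1), prod_range_succ]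
    · rw [if_neg h0] at hm
      subst hm
      have hsnoc : ∀ (y : Fin (Mm u t) → A) (b : A),
          emit f g h x (extObs (Fin.snoc y b)) u 0 t = emit f g h x (extObs y) u 0 t :=
        fun y b => emit_congr f g h (fun _ _ => rfl) (fun _ _ => rfl)
          fun j hj => extObs_snoc_of_lt y b hj
      rw [Fintype.sum_pi_fin_succ]
      simp_rw [hsnoc, extObs_snoc_self, if_neg h0, ← mul_sum, ← sum_mul, ih rfl]
      split_ifs
      · rw [hg1, mul_one, add_zero]
      · rw [hmX, prod_range_succ]

end Observations

section Endpoints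

def endpoint {t : ℕ} (u : Fin t → E) : ℕ × ℕ := (Nn (extPath u) t, Mm (extPath u) t)

lemma endpoint_mem {t : ℕ} (u : Fin t → E) : endpoint u ∈ range (t + 1) ×ˢ range (t + 1) :=
  mem_product.2 ⟨mem_range_succ_iff.2 (Nn_le _ _), mem_range_succ_iff.2 (Mm_le _ _)⟩

variable {A : Type} (pr : E → E → ℝ) (mu : E → ℝ) (f g : A → ℝ) (h : A → A → ℝ)

lemma walkProb_eq_sum (t : ℕ) (k : ℕ × ℕ) :
    walkProb pr mu t k.1 k.2 = ∑ u : Fin t → E, if endpoint u = k then pathProb pr mu u else 0 :=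
  by simp only [walkProb, endpoint, Prod.ext_iff]

lemma jointProb_eq_sum (x y : ℕ → A) (t : ℕ) (k : ℕ × ℕ) :
    jointProb pr mu f g h x y t k.1 k.2 = ∑ u : Fin t → E,
      if endpoint u = k then pathProb pr mu u * emit f g h x y (extPath u) 0 t else 0 :=
  by simp only [jointProb, endpoint, Prod.ext_iff]

lemma sum_walkProb_mul (t : ℕ) (G : ℕ × ℕ → ℝ) :
    ∑ k ∈ range (t + 1) ×ˢ range (t + 1), walkProb pr mu t k.1 k.2 * G k
      = ∑ u : Fin t → E, pathProb pr mu u * G (endpoint u) := by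
  simp_rw [walkProb_eq_sum, sum_mul, ite_mul, zero_mul]
  rw [sum_comm]
  exact sum_congr rfl fun u _ => by rw [sum_ite_eq, if_pos (endpoint_mem u)]

variable {pr mu f g h}

lemma walkProb_nonneg (hpr : ∀ e e', 0 ≤ pr e e') (hmu : ∀ e, 0 ≤ mu e) (t n m : ℕ) :
    0 ≤ walkProb pr mu t n m :=
  sum_nonneg fun u _ => by split_ifs <;> simp [pathProb_nonneg pr mu hpr hmu u]

lemma walkProb_le_one (hpr : ∀ e e', 0 ≤ pr e e') (hmu : ∀ e, 0 ≤ mu e)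
    (hpr1 : ∀ e, ∑ e', pr e e' = 1) (hmu1 : ∑ e, mu e = 1) (t n m : ℕ) :
    walkProb pr mu t n m ≤ 1 :=
  (sum_le_sum fun u _ => by split_ifs <;> simp [pathProb_nonneg pr mu hpr hmu u]).trans
    (sum_pathProb_le_one mu hmu hpr1 hmu1 t)

lemma jointProb_nonneg (hpr : ∀ e e', 0 ≤ pr e e') (hmu : ∀ e, 0 ≤ mu e)
    (hf : ∀ a, 0 ≤ f a) (hg : ∀ a, 0 ≤ g a) (hh : ∀ a b, 0 ≤ h a b) (x y : ℕ → A)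
    (t n m : ℕ) : 0 ≤ jointProb pr mu f g h x y t n m :=
  sum_nonneg fun u _ => by
    split_ifs
    exacts [mul_nonneg (pathProb_nonneg pr mu hpr hmu u) (emit_nonneg hf hg hh _ _ _ _ _),
      le_rfl]

lemma jointProb_pos (hpr : ∀ e e', 0 < pr e e') (hmu : ∀ e, 0 < mu e)
    (hf : ∀ a, 0 < f a) (hg : ∀ a, 0 < g a) (hh : ∀ a b, 0 < h a b) (x y : ℕ → A)
    {t : ℕ} (u : Fin t → E) : 0 < jointProb pr mu f g h x y t (endpoint u).1 (endpoint u).2 := by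
  rw [jointProb_eq_sum]
  refine sum_pos' (fun v _ => ?_) ⟨u, mem_univ u, by
    simpa using mul_pos (pathProb_pos pr mu hpr hmu u) (emit_pos hf hg hh _ _ _ _ _)⟩
  split_ifs
  exacts [mul_nonneg (pathProb_pos pr mu hpr hmu v).le (emit_pos hf hg hh _ _ _ _ _).le, le_rfl]

lemma jointProb_le_Qprob (hpr : ∀ e e', 0 ≤ pr e e') (hmu : ∀ e, 0 ≤ mu e)
    (hf : ∀ a, 0 ≤ f a) (hg : ∀ a, 0 ≤ g a) (hh : ∀ a b, 0 ≤ h a b) (x y : ℕ → A)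
    {t n m : ℕ} (ht : t ≤ n + m) :
    jointProb pr mu f g h x y t n m ≤ Qprob pr mu f g h x y n m :=
  single_le_sum (f := fun l => jointProb pr mu f g h x y l n m)
    (fun l _ => jointProb_nonneg hpr hmu hf hg hh x y l n m) (mem_range_succ_iff.2 ht)

lemma Qprob_congr {x x' y y' : ℕ → A} {n m : ℕ} (hx : ∀ j < n, x j = x' j)
    (hy : ∀ j < m, y j = y' j) :
    Qprob pr mu f g h x y n m = Qprob pr mu f g h x' y' n m := by
  refine sum_congr rfl fun l _ => sum_congr rfl fun u _ => ?_
  split_ifs with hu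
  · rw [emit_congr f g h (fun _ _ => rfl) (hu.1 ▸ hx) (hu.2 ▸ hy)]
  · rfl

variable [Nonempty A] [Fintype A]

lemma sum_jointProb_extObs (hg1 : ∑ b, g b = 1) (hmX : ∀ a, ∑ b, h a b = f a) (x : ℕ → A)
    (t n m : ℕ) :
    ∑ y : Fin m → A, jointProb pr mu f g h x (extObs y) t n m
      = walkProb pr mu t n m * ∏ j ∈ range n, f (x j) := by
  simp only [jointProb, walkProb, sum_mul]
  rw [sum_comm]
  refine sum_congr rfl fun u _ => ?_
  split_ifs with hu
  · rw [← mul_sum, sum_emit_extObs hg1 hmX x _ t hu.2, hu.1]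
  · simp

lemma sum_Qprob_extObs_le (hpr : ∀ e e', 0 ≤ pr e e') (hmu : ∀ e, 0 ≤ mu e)
    (hpr1 : ∀ e, ∑ e', pr e e' = 1) (hmu1 : ∑ e, mu e = 1) (hf : ∀ a, 0 ≤ f a)
    (hg1 : ∑ b, g b = 1) (hmX : ∀ a, ∑ b, h a b = f a) (x : ℕ → A) (n m : ℕ) :
    ∑ y : Fin m → A, Qprob pr mu f g h x (extObs y) n m
      ≤ (n + m + 1) * ∏ j ∈ range n, f (x j) := by
  simp only [Qprob]
  rw [sum_comm]
  simp_rw [sum_jointProb_extObs hg1 hmX]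
  calc ∑ l ∈ range (n + m + 1), walkProb pr mu l n m * ∏ j ∈ range n, f (x j)
      ≤ ∑ l ∈ range (n + m + 1), ∏ j ∈ range n, f (x j) :=
        sum_le_sum fun l _ => mul_le_of_le_one_left (prod_nonneg fun _ _ => hf _)
          (walkProb_le_one hpr hmu hpr1 hmu1 l n m)
    _ = (n + m + 1) * ∏ j ∈ range n, f (x j) := by simp

end Endpoints

section Cylinders

abbrev Prefixes (A : Type) (k : ℕ × ℕ) : Type := (Fin k.1 → A) × (Fin k.2 → A)

/-- The cylinder events of time `t`: the hidden path up to `t` together with the letters it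
has emitted. They partition the sample space. -/
abbrev Cylinder (A : Type) (t : ℕ) : Type := Σ u : Fin t → E, Prefixes A (endpoint u)

variable {A : Type}

def cylinderOf (t : ℕ) (ω : (ℕ → E) × (ℕ → A) × (ℕ → A)) : Cylinder A t :=
  ⟨fun i => ω.1 i, fun j => ω.2.1 j, fun j => ω.2.2 j⟩

variable [Nonempty A]

lemma cylinderOf_preimage {t : ℕ} (c : Cylinder A t) :
    cylinderOf t ⁻¹' {c} = {ω | (∀ i, ∀ hi : i < t, ω.1 i = c.1 ⟨i, hi⟩) ∧
      (∀ i < Nn (extPath c.1) t, ω.2.1 i = extObs c.2.1 i) ∧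
      (∀ j < Mm (extPath c.1) t, ω.2.2 j = extObs c.2.2 j)} := by
  obtain ⟨u, x, y⟩ := c
  ext ω
  simp only [Set.mem_preimage, Set.mem_singleton_iff, Set.mem_ofPred_eq]
  constructor
  · rintro ⟨⟩
    exact ⟨fun i hi => rfl, fun i hi => by simp [extObs, endpoint, hi],
      fun j hj => by simp [extObs, endpoint, hj]⟩
  · rintro ⟨hu, hx, hy⟩
    obtain rfl : (fun i : Fin t => ω.1 i) = u := funext fun i => hu i i.2
    have hx' : (fun j : Fin _ => ω.2.1 j) = x :=
      funext fun j => (hx j j.2).trans (extObs_of_lt x j.2)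
    have hy' : (fun j : Fin _ => ω.2.2 j) = y :=
      funext fun j => (hy j j.2).trans (extObs_of_lt y j.2)
    rw [cylinderOf, hx', hy']

variable [MeasurableSpace A] [MeasurableSingletonClass A]

lemma measurableSet_cylinderOf_preimage {t : ℕ} (c : Cylinder A t) :
    MeasurableSet (cylinderOf t ⁻¹' {c}) := by
  rw [cylinderOf_preimage]
  simp only [Set.ofPred_and, Set.ofPred_forall]
  refine .inter (.iInter fun i => .iInter fun _ => ?_)
    (.inter (.iInter fun i => .iInter fun _ => ?_) (.iInter fun j => .iInter fun _ => ?_))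
  exacts [(by fun_prop : Measurable fun ω : (ℕ → E) × (ℕ → A) × (ℕ → A) => ω.1 i)
      (measurableSet_singleton _),
    (by fun_prop : Measurable fun ω : (ℕ → E) × (ℕ → A) × (ℕ → A) => ω.2.1 i)
      (measurableSet_singleton _),
    (by fun_prop : Measurable fun ω : (ℕ → E) × (ℕ → A) × (ℕ → A) => ω.2.2 j)
      (measurableSet_singleton _)]

variable [Fintype A]

lemma integral_log_Qprob (ℙ : Measure ((ℕ → E) × (ℕ → A) × (ℕ → A))) [IsProbabilityMeasure ℙ]
    (pr : E → E → ℝ) (mu : E → ℝ) (f g : A → ℝ) (h : A → A → ℝ) (t : ℕ) :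
    ∫ ω, Real.log (Qprob pr mu f g h ω.2.1 ω.2.2 (Nn ω.1 t) (Mm ω.1 t)) ∂ℙ
      = ∑ c : Cylinder A t, ℙ.real (cylinderOf t ⁻¹' {c}) *
          Real.log (Qprob pr mu f g h (extObs c.2.1) (extObs c.2.2)
            (endpoint c.1).1 (endpoint c.1).2) := by
  rw [← integral_comp_eq_sum_preimage ℙ _ measurableSet_cylinderOf_preimage]
  refine integral_congr_ae (.of_forall fun ω => ?_)
  have hpath : ∀ i < t, ω.1 i = extPath (cylinderOf t ω).1 i := fun i hi => by
    simp [extPath, cylinderOf, hi]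
  simp only
  rw [Nn_congr hpath, Mm_congr hpath]
  exact congrArg Real.log (Qprob_congr
    (fun j hj => (extObs_of_lt (cylinderOf t ω).2.1 (show j < (endpoint _).1 from hj)).symm)
    fun j hj => (extObs_of_lt (cylinderOf t ω).2.2 (show j < (endpoint _).2 from hj)).symm)

end Cylinders

section Regrouping

variable {A : Type} [Nonempty A] [Fintype A] (pr : E → E → ℝ) (mu : E → ℝ) (f g : A → ℝ)
  (h : A → A → ℝ)

lemma sum_cylinder_eq_sum_endpoint (t : ℕ) (F : (k : ℕ × ℕ) → Prefixes A k → ℝ) :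
    ∑ c : Cylinder A t, pathProb pr mu c.1 *
        emit f g h (extObs c.2.1) (extObs c.2.2) (extPath c.1) 0 t * F (endpoint c.1) c.2
      = ∑ k ∈ range (t + 1) ×ˢ range (t + 1), ∑ b : Prefixes A k,
          jointProb pr mu f g h (extObs b.1) (extObs b.2) t k.1 k.2 * F k b := by
  symm
  calc _ = ∑ k ∈ range (t + 1) ×ˢ range (t + 1), ∑ u : Fin t → E, if endpoint u = k then
          ∑ b : Prefixes A k, pathProb pr mu u *
            emit f g h (extObs b.1) (extObs b.2) (extPath u) 0 t * F k b else 0 := by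
        refine sum_congr rfl fun k _ => ?_
        simp_rw [jointProb_eq_sum, sum_mul]
        rw [sum_comm]
        refine sum_congr rfl fun u _ => ?_
        split_ifs <;> simp
    _ = _ := by
        rw [sum_comm, Fintype.sum_sigma]
        exact sum_congr rfl fun u _ => by rw [sum_ite_eq, if_pos (endpoint_mem u)]

end Regrouping

section FiberBound

open Real

variable {A : Type} [Nonempty A] [Fintype A]
  {pr₀ : E → E → ℝ} {mu₀ : E → ℝ} {f₀ g₀ : A → ℝ} {h₀ : A → A → ℝ}
  {pr : E → E → ℝ} {mu : E → ℝ} {f g : A → ℝ} {h : A → A → ℝ}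

lemma walkProb_mul_le_sum_jointProb_mul_log_sub
    (hpr₀ : ∀ e e', 0 ≤ pr₀ e e') (hmu₀ : ∀ e, 0 ≤ mu₀ e) (hf₀ : ∀ a, 0 < f₀ a)
    (hg₀ : ∀ a, 0 ≤ g₀ a) (hh₀ : ∀ a b, 0 ≤ h₀ a b) (hf₀1 : ∑ a, f₀ a = 1)
    (hg₀1 : ∑ a, g₀ a = 1) (hmarg₀X : ∀ a, ∑ b, h₀ a b = f₀ a)
    (hpr : ∀ e e', 0 < pr e e') (hmu : ∀ e, 0 < mu e) (hf : ∀ a, 0 < f a) (hg : ∀ a, 0 < g a)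
    (hh : ∀ a b, 0 < h a b) (hpr1 : ∀ e, ∑ e', pr e e' = 1) (hmu1 : ∑ e, mu e = 1)
    (hg1 : ∑ a, g a = 1) (hmargX : ∀ a, ∑ b, h a b = f a) (t : ℕ) (k : ℕ × ℕ) :
    walkProb pr₀ mu₀ t k.1 k.2 * (log (walkProb pr₀ mu₀ t k.1 k.2) - log (k.1 + k.2 + 1)
        - k.1 * ∑ a, f₀ a * log (f a / f₀ a))
      ≤ ∑ b : Prefixes A k, jointProb pr₀ mu₀ f₀ g₀ h₀ (extObs b.1) (extObs b.2) t k.1 k.2 *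
          (log (Qprob pr₀ mu₀ f₀ g₀ h₀ (extObs b.1) (extObs b.2) k.1 k.2)
            - log (Qprob pr mu f g h (extObs b.1) (extObs b.2) k.1 k.2)) := by
  obtain ⟨n, m⟩ := k
  set w := walkProb pr₀ mu₀ t n m
  have hJ₀ : ∀ (x : Fin n → A) (y : Fin m → A),
      0 ≤ jointProb pr₀ mu₀ f₀ g₀ h₀ (extObs x) (extObs y) t n m :=
    fun x y => jointProb_nonneg hpr₀ hmu₀ (fun a => (hf₀ a).le) hg₀ hh₀ _ _ t n m
  have hsumJ₀ : ∀ x : Fin n → A, ∑ y : Fin m → A,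
      jointProb pr₀ mu₀ f₀ g₀ h₀ (extObs x) (extObs y) t n m = w * ∏ j, f₀ (x j) := fun x => by
    rw [sum_jointProb_extObs hg₀1 hmarg₀X, prod_range_extObs]
  have hw0 : 0 ≤ w := walkProb_nonneg hpr₀ hmu₀ t n m
  rcases hw0.eq_or_lt with hw | hw
  · have hzero : ∀ x y, jointProb pr₀ mu₀ f₀ g₀ h₀ (extObs x) (extObs y) t n m = 0 :=
      fun x y => (sum_eq_zero_iff_of_nonneg fun y _ => hJ₀ x y).1
        (by rw [hsumJ₀, ← hw, zero_mul]) y (mem_univ y)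
    simp [← hw, hzero]
  obtain ⟨u, -, hu⟩ := exists_ne_zero_of_sum_ne_zero
    (by rw [← walkProb_eq_sum pr₀ mu₀ t (n, m)]; exact hw.ne')
  have hend : endpoint u = (n, m) := by by_contra hne; exact hu (if_neg hne)
  have htnm : t ≤ n + m := by
    have := le_Nn_add_Mm (extPath u) t
    simp only [endpoint, Prod.mk.injEq] at hend
    omega
  have hQ : ∀ (x : Fin n → A) (y : Fin m → A),
      0 < Qprob pr mu f g h (extObs x) (extObs y) n m := fun x y => by
    have hJ := jointProb_pos hpr hmu hf hg hh (extObs x) (extObs y) u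
    rw [hend] at hJ
    exact hJ.trans_le (jointProb_le_Qprob (fun e e' => (hpr e e').le) (fun e => (hmu e).le)
      (fun a => (hf a).le) (fun a => (hg a).le) (fun a b => (hh a b).le) _ _ htnm)
  have hslice : ∀ x : Fin n → A,
      w * (∏ j, f₀ (x j)) * (log w - log (n + m + 1) - ∑ j, log (f (x j) / f₀ (x j)))
        ≤ ∑ y : Fin m → A, jointProb pr₀ mu₀ f₀ g₀ h₀ (extObs x) (extObs y) t n m *
          (log (Qprob pr₀ mu₀ f₀ g₀ h₀ (extObs x) (extObs y) n m)
            - log (Qprob pr mu f g h (extObs x) (extObs y) n m)) := by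
    intro x
    have hP₀ : 0 < ∏ j, f₀ (x j) := prod_pos fun j _ => hf₀ _
    have hP : 0 < ∏ j, f (x j) := prod_pos fun j _ => hf _
    have key := mul_log_div_le_sum_mul_log_sub univ (fun y _ => hJ₀ x y)
      (fun y _ => jointProb_le_Qprob hpr₀ hmu₀ (fun a => (hf₀ a).le) hg₀ hh₀ _ _ htnm)
      (fun y _ => hQ x y) (by rw [hsumJ₀]; positivity)
      ((sum_Qprob_extObs_le (fun e e' => (hpr e e').le) (fun e => (hmu e).le) hpr1 hmu1
        (fun a => (hf a).le) hg1 hmargX (extObs x) n m).trans_eq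
        (by rw [prod_range_extObs]))
    rw [hsumJ₀] at key
    refine le_trans (le_of_eq ?_) key
    rw [log_div (by positivity) (by positivity), log_mul hw.ne' hP₀.ne',
      log_mul (by positivity) hP.ne', log_prod (fun j _ => (hf₀ _).ne'),
      log_prod (fun j _ => (hf _).ne')]
    simp_rw [log_div (hf _).ne' (hf₀ _).ne', sum_sub_distrib]
    ring
  calc w * (log w - log (n + m + 1) - n * ∑ a, f₀ a * log (f a / f₀ a))
      = ∑ x : Fin n → A,
          w * (∏ j, f₀ (x j)) * (log w - log (n + m + 1) - ∑ j, log (f (x j) / f₀ (x j))) := by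
        have hsplit : ∀ x : Fin n → A, w * (∏ j, f₀ (x j)) *
            (log w - log (n + m + 1) - ∑ j, log (f (x j) / f₀ (x j)))
              = w * (log w - log (n + m + 1)) * ∏ j, f₀ (x j)
                - w * ((∏ j, f₀ (x j)) * ∑ j, log (f (x j) / f₀ (x j))) := fun x => by ring
        rw [sum_congr rfl fun x _ => hsplit x, sum_sub_distrib, ← mul_sum, ← mul_sum,
          Fintype.sum_prod_apply_eq_one hf₀1,
          Fintype.sum_prod_apply_mul_sum hf₀1 fun a => log (f a / f₀ a)]
        ring
    _ ≤ _ := by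
        rw [Fintype.sum_prod_type]
        exact sum_le_sum fun x _ => hslice x

end FiberBound

section PerTimeBound

open Real

variable {A : Type} [Nonempty A] [Fintype A]
  {pr₀ : E → E → ℝ} {mu₀ : E → ℝ} {f₀ g₀ : A → ℝ} {h₀ : A → A → ℝ}
  {pr : E → E → ℝ} {mu : E → ℝ} {f g : A → ℝ} {h : A → A → ℝ}

lemma sum_walkProb_mul_log_sub_ge (hpr₀ : ∀ e e', 0 ≤ pr₀ e e') (hmu₀ : ∀ e, 0 ≤ mu₀ e)
    (hpr₀1 : ∀ e, ∑ e', pr₀ e e' = 1) (hmu₀1 : ∑ e, mu₀ e = 1)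
    (hstat₀ : ∀ e', ∑ e, mu₀ e * pr₀ e e' = mu₀ e') (S : ℝ) {t : ℕ} (ht : 0 < t) :
    -(4 * log (t + 1)) - t * (1 - mu₀ 1) * S
      ≤ ∑ k ∈ range (t + 1) ×ˢ range (t + 1), walkProb pr₀ mu₀ t k.1 k.2 *
          (log (walkProb pr₀ mu₀ t k.1 k.2) - log (k.1 + k.2 + 1) - k.1 * S) := by
  set K := range (t + 1) ×ˢ range (t + 1)
  set w : ℕ × ℕ → ℝ := fun k => walkProb pr₀ mu₀ t k.1 k.2
  have hw0 : ∀ k ∈ K, 0 ≤ w k := fun k _ => walkProb_nonneg hpr₀ hmu₀ t k.1 k.2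
  have hw1 : ∑ k ∈ K, w k = 1 := by
    simpa [sum_pathProb_eq_one mu₀ hpr₀1 hmu₀1 ht] using sum_walkProb_mul pr₀ mu₀ t fun _ => 1
  have hmean : ∑ k ∈ K, w k * k.1 = t * (1 - mu₀ 1) :=
    (sum_walkProb_mul pr₀ mu₀ t fun k => (k.1 : ℝ)).trans
      (sum_pathProb_mul_Nn mu₀ hpr₀1 hmu₀1 hstat₀ t)
  have hentropy : -log ((t + 1) ^ 2 : ℝ) ≤ ∑ k ∈ K, w k * log (w k) := by
    simpa [K, sq] using neg_log_card_le_sum_mul_log K hw0 hw1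
  have hlog_le : ∑ k ∈ K, w k * log (k.1 + k.2 + 1) ≤ log ((t + 1) ^ 2 : ℝ) := by
    rw [← mul_one (log _), ← hw1, mul_sum]
    refine sum_le_sum fun k hk => ?_
    obtain ⟨hk1, hk2⟩ := mem_product.1 hk
    rw [mem_range_succ_iff] at hk1 hk2
    rw [mul_comm]
    refine mul_le_mul_of_nonneg_right (log_le_log (by positivity) ?_) (hw0 k hk)
    have : ((k.1 + k.2 : ℕ) : ℝ) ≤ t + t := by exact_mod_cast add_le_add hk1 hk2
    push_cast at this
    nlinarith
  have hsplit : ∑ k ∈ K, w k * (log (w k) - log (k.1 + k.2 + 1) - k.1 * S)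
      = ∑ k ∈ K, w k * log (w k) - ∑ k ∈ K, w k * log (k.1 + k.2 + 1)
        - (∑ k ∈ K, w k * k.1) * S := by
    rw [sum_mul, ← sum_sub_distrib, ← sum_sub_distrib]
    exact sum_congr rfl fun k _ => by ring
  rw [hsplit, hmean, show (4 : ℝ) * log (t + 1) = 2 * log ((t + 1) ^ 2 : ℝ) by
    rw [log_pow]; push_cast; ring]
  linarith

variable [MeasurableSpace A] [MeasurableSingletonClass A]

lemma integral_log_Qprob_sub_ge (ℙ : Measure ((ℕ → E) × (ℕ → A) × (ℕ → A)))
    [IsProbabilityMeasure ℙ] {t : ℕ} (ht : 0 < t)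
    (hLaw : ∀ (u : Fin t → E) (x y : ℕ → A),
      (ℙ {ω : (ℕ → E) × (ℕ → A) × (ℕ → A) |
          (∀ i, ∀ hi : i < t, ω.1 i = u ⟨i, hi⟩) ∧
          (∀ i < Nn (extPath u) t, ω.2.1 i = x i) ∧
          (∀ j < Mm (extPath u) t, ω.2.2 j = y j)}).toReal
        = pathProb pr₀ mu₀ u * emit f₀ g₀ h₀ x y (extPath u) 0 t)
    (hpr₀ : ∀ e e', 0 ≤ pr₀ e e') (hmu₀ : ∀ e, 0 ≤ mu₀ e) (hf₀ : ∀ a, 0 < f₀ a)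
    (hg₀ : ∀ a, 0 ≤ g₀ a) (hh₀ : ∀ a b, 0 ≤ h₀ a b) (hpr₀1 : ∀ e, ∑ e', pr₀ e e' = 1)
    (hmu₀1 : ∑ e, mu₀ e = 1) (hf₀1 : ∑ a, f₀ a = 1) (hg₀1 : ∑ a, g₀ a = 1)
    (hstat₀ : ∀ e', ∑ e, mu₀ e * pr₀ e e' = mu₀ e') (hmarg₀X : ∀ a, ∑ b, h₀ a b = f₀ a)
    (hpr : ∀ e e', 0 < pr e e') (hmu : ∀ e, 0 < mu e) (hf : ∀ a, 0 < f a) (hg : ∀ a, 0 < g a)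
    (hh : ∀ a b, 0 < h a b) (hpr1 : ∀ e, ∑ e', pr e e' = 1) (hmu1 : ∑ e, mu e = 1)
    (hg1 : ∑ a, g a = 1) (hmargX : ∀ a, ∑ b, h a b = f a) :
    -(4 * log (t + 1)) - t * (1 - mu₀ 1) * ∑ a, f₀ a * log (f a / f₀ a)
      ≤ ∫ ω, log (Qprob pr₀ mu₀ f₀ g₀ h₀ ω.2.1 ω.2.2 (Nn ω.1 t) (Mm ω.1 t)) ∂ℙ
        - ∫ ω, log (Qprob pr mu f g h ω.2.1 ω.2.2 (Nn ω.1 t) (Mm ω.1 t)) ∂ℙ := by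
  have hcyl : ∀ c : Cylinder A t, ℙ.real (cylinderOf t ⁻¹' {c})
      = pathProb pr₀ mu₀ c.1 * emit f₀ g₀ h₀ (extObs c.2.1) (extObs c.2.2) (extPath c.1) 0 t :=
    fun c => by rw [measureReal_def, cylinderOf_preimage, hLaw]
  rw [integral_log_Qprob, integral_log_Qprob, ← sum_sub_distrib]
  simp_rw [← mul_sub, hcyl]
  rw [sum_cylinder_eq_sum_endpoint pr₀ mu₀ f₀ g₀ h₀ t fun k b =>
    log (Qprob pr₀ mu₀ f₀ g₀ h₀ (extObs b.1) (extObs b.2) k.1 k.2)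
      - log (Qprob pr mu f g h (extObs b.1) (extObs b.2) k.1 k.2)]
  exact (sum_walkProb_mul_log_sub_ge hpr₀ hmu₀ hpr₀1 hmu₀1 hstat₀ _ ht).trans
    (sum_le_sum fun k _ => walkProb_mul_le_sum_jointProb_mul_log_sub hpr₀ hmu₀ hf₀ hg₀ hh₀
      hf₀1 hg₀1 hmarg₀X hpr hmu hf hg hh hpr1 hmu1 hg1 hmargX t k)

end PerTimeBound

theorem D_positive_on_Theta_marg_general {A : Type} [Fintype A] [Nonempty A]
    [MeasurableSpace A] [MeasurableSingletonClass A]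
    (ℙ : Measure ((ℕ → E) × (ℕ → A) × (ℕ → A))) [IsProbabilityMeasure ℙ]
    -- the true parameter θ₀ ∈ Θ_0 :
    (pr₀ : E → E → ℝ) (mu₀ : E → ℝ) (f₀ g₀ : A → ℝ) (h₀ : A → A → ℝ)
    (hpr₀ : ∀ e e', 0 < pr₀ e e') (hmu₀ : ∀ e, 0 < mu₀ e)
    (hf₀ : ∀ a, 0 < f₀ a) (hg₀ : ∀ a, 0 < g₀ a) (hh₀ : ∀ a b, 0 < h₀ a b)
    (hpr₀sum : ∀ e, ∑ e', pr₀ e e' = 1) (hmu₀sum : ∑ e, mu₀ e = 1)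
    (hf₀sum : ∑ a, f₀ a = 1) (hg₀sum : ∑ a, g₀ a = 1)
    (hstat₀ : ∀ e', ∑ e, mu₀ e * pr₀ e e' = mu₀ e')
    (hLaw : ∀ t : ℕ, 1 ≤ t → ∀ (u : Fin t → E) (x y : ℕ → A),
      (ℙ {ω : (ℕ → E) × (ℕ → A) × (ℕ → A) |
          (∀ i, ∀ hi : i < t, ω.1 i = u ⟨i, hi⟩) ∧
          (∀ i < Nn (extPath u) t, ω.2.1 i = x i) ∧
          (∀ j < Mm (extPath u) t, ω.2.2 j = y j)}).toReal
        = pathProb pr₀ mu₀ u * emit f₀ g₀ h₀ x y (extPath u) 0 t)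
    -- another parameter θ ∈ Θ_0 :
    (pr : E → E → ℝ) (mu : E → ℝ) (f g : A → ℝ) (h : A → A → ℝ)
    (hpr : ∀ e e', 0 < pr e e') (hmu : ∀ e, 0 < mu e)
    (hf : ∀ a, 0 < f a) (hg : ∀ a, 0 < g a) (hh : ∀ a b, 0 < h a b)
    (hprsum : ∀ e, ∑ e', pr e e' = 1) (hmusum : ∑ e, mu e = 1)
    (hfsum : ∑ a, f a = 1) (hgsum : ∑ a, g a = 1)
    -- Assumption 3 for both parameters :
    (hmarg₀X : ∀ a, ∑ b, h₀ a b = f₀ a)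
    (hmargX : ∀ a, ∑ b, h a b = f a)
    (hne : f ≠ f₀)
    (W₀ W : ℝ)
    (hW₀ : Filter.Tendsto
      (fun t : ℕ => (∫ ω, Real.log (Qprob pr₀ mu₀ f₀ g₀ h₀ ω.2.1 ω.2.2
        (Nn ω.1 t) (Mm ω.1 t)) ∂ℙ) / t) Filter.atTop (nhds W₀))
    (hW : Filter.Tendsto
      (fun t : ℕ => (∫ ω, Real.log (Qprob pr mu f g h ω.2.1 ω.2.2
        (Nn ω.1 t) (Mm ω.1 t)) ∂ℙ) / t) Filter.atTop (nhds W)) :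
    -((1 - mu₀ 1) / 2) * ∑ a, f₀ a * Real.log (f a / f₀ a) ≤ W₀ - W ∧
    0 < -((1 - mu₀ 1) / 2) * ∑ a, f₀ a * Real.log (f a / f₀ a) := by
  have hS : ∑ a, f₀ a * Real.log (f a / f₀ a) < 0 :=
    sum_mul_log_div_neg hf₀ hf hf₀sum hfsum hne
  have hp : 0 < 1 - mu₀ 1 := by
    rw [Fin.sum_univ_three] at hmu₀sum
    linarith [hmu₀ 0, hmu₀ 2]
  have hrate : (1 - mu₀ 1) * -∑ a, f₀ a * Real.log (f a / f₀ a) ≤ W₀ - W := by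
    refine le_of_tendsto_of_tendsto
      ((tendsto_const_nhds.sub (tendsto_log_add_one_div_atTop.const_mul 4)).trans_eq
        (by rw [mul_zero, sub_zero])) (hW₀.sub hW) ?_
    filter_upwards [eventually_gt_atTop 0] with t ht
    have htR : (0 : ℝ) < t := Nat.cast_pos.2 ht
    rw [← sub_div, le_div_iff₀ htR]
    refine le_trans (le_of_eq ?_) (integral_log_Qprob_sub_ge ℙ ht (hLaw t ht)
      (fun e e' => (hpr₀ e e').le) (fun e => (hmu₀ e).le) hf₀ (fun a => (hg₀ a).le)
      (fun a b => (hh₀ a b).le) hpr₀sum hmu₀sum hf₀sum hg₀sum hstat₀ hmarg₀X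
      hpr hmu hf hg hh hprsum hmusum hgsum hmargX)
    field_simp
    ring
  constructor <;> nlinarith

/-- **divergence property on `Θ_marg`.** With `ℙ` the law of the pair-HMM
under `θ₀ ∈ Θ_0`, suppose both `θ₀` and `θ` satisfy the marginal conditions `h_X = f`
and `h_Y = g` (Assumption 3), and `f ≠ f₀`.  Let `p = mu₀(V)` be the stationary
probability of a vertical step under `θ₀` (so that `t⁻¹ N_t → 1 − p` a.s.).  Then
`D(θ|θ₀) = w(θ₀) − w(θ) ≥ −((1−p)/2) Σ_x f₀(x) log(f(x)/f₀(x)) > 0`.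
(The symmetric statement holds for `g ≠ g₀`.) -/
theorem D_positive_on_Theta_marg {A : Type} [Fintype A] [Nonempty A]
    [MeasurableSpace A] [MeasurableSingletonClass A]
    (ℙ : Measure ((ℕ → E) × (ℕ → A) × (ℕ → A))) [IsProbabilityMeasure ℙ]
    -- the true parameter θ₀ ∈ Θ_0 :
    (pr₀ : E → E → ℝ) (mu₀ : E → ℝ) (f₀ g₀ : A → ℝ) (h₀ : A → A → ℝ)
    (hpr₀ : ∀ e e', 0 < pr₀ e e') (hmu₀ : ∀ e, 0 < mu₀ e)
    (hf₀ : ∀ a, 0 < f₀ a) (hg₀ : ∀ a, 0 < g₀ a) (hh₀ : ∀ a b, 0 < h₀ a b)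
    (hpr₀sum : ∀ e, ∑ e', pr₀ e e' = 1) (hmu₀sum : ∑ e, mu₀ e = 1)
    (hf₀sum : ∑ a, f₀ a = 1) (hg₀sum : ∑ a, g₀ a = 1) (hh₀sum : ∑ a, ∑ b, h₀ a b = 1)
    (hstat₀ : ∀ e', ∑ e, mu₀ e * pr₀ e e' = mu₀ e')
    (hLaw : ∀ t : ℕ, 1 ≤ t → ∀ (u : Fin t → E) (x y : ℕ → A),
      (ℙ {ω : (ℕ → E) × (ℕ → A) × (ℕ → A) |
          (∀ i, ∀ hi : i < t, ω.1 i = u ⟨i, hi⟩) ∧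
          (∀ i < Nn (extPath u) t, ω.2.1 i = x i) ∧
          (∀ j < Mm (extPath u) t, ω.2.2 j = y j)}).toReal
        = pathProb pr₀ mu₀ u * emit f₀ g₀ h₀ x y (extPath u) 0 t)
    -- another parameter θ ∈ Θ_0 :
    (pr : E → E → ℝ) (mu : E → ℝ) (f g : A → ℝ) (h : A → A → ℝ)
    (hpr : ∀ e e', 0 < pr e e') (hmu : ∀ e, 0 < mu e)
    (hf : ∀ a, 0 < f a) (hg : ∀ a, 0 < g a) (hh : ∀ a b, 0 < h a b)
    (hprsum : ∀ e, ∑ e', pr e e' = 1) (hmusum : ∑ e, mu e = 1)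
    (hfsum : ∑ a, f a = 1) (hgsum : ∑ a, g a = 1) (hhsum : ∑ a, ∑ b, h a b = 1)
    (hstat : ∀ e', ∑ e, mu e * pr e e' = mu e')
    -- Assumption 3 for both parameters :
    (hmarg₀X : ∀ a, ∑ b, h₀ a b = f₀ a) (hmarg₀Y : ∀ b, ∑ a, h₀ a b = g₀ b)
    (hmargX : ∀ a, ∑ b, h a b = f a) (hmargY : ∀ b, ∑ a, h a b = g b)
    (hne : f ≠ f₀)
    (W₀ W : ℝ)
    (hW₀ : Filter.Tendsto
      (fun t : ℕ => (∫ ω, Real.log (Qprob pr₀ mu₀ f₀ g₀ h₀ ω.2.1 ω.2.2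
        (Nn ω.1 t) (Mm ω.1 t)) ∂ℙ) / t) Filter.atTop (nhds W₀))
    (hW : Filter.Tendsto
      (fun t : ℕ => (∫ ω, Real.log (Qprob pr mu f g h ω.2.1 ω.2.2
        (Nn ω.1 t) (Mm ω.1 t)) ∂ℙ) / t) Filter.atTop (nhds W)) :
    -((1 - mu₀ 1) / 2) * ∑ a, f₀ a * Real.log (f a / f₀ a) ≤ W₀ - W ∧
    0 < -((1 - mu₀ 1) / 2) * ∑ a, f₀ a * Real.log (f a / f₀ a) :=
  D_positive_on_Theta_marg_general ℙ pr₀ mu₀ f₀ g₀ h₀ hpr₀ hmu₀ hf₀ hg₀ hh₀ hpr₀sum hmu₀sum hf₀sum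
    hg₀sum hstat₀ hLaw pr mu f g h hpr hmu hf hg hh hprsum hmusum hfsum hgsum hmarg₀X hmargX hne W₀
    W hW₀ hW
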